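/- arXiv:2303.07841 — 2 statements merged into one kernel-verified Lean document; each statement's English description precedes it below -/
import Mathlib

section
/- For the N-qubit W state W_N = (1/√N)(|10⋯0⟩ + |01⋯0⟩ + ⋯ + |00⋯1⟩), N ≥ 2, the quantum state advantage equals Γ_C(|W_N⟩⟨W_N|) = (3N − 2)/N. -/
/-!
For a pure state `ρ = |w⟩⟨w|` one has `−tr([A, ρ][B, ρ]) = ⟨AB + BA⟩ − 2⟨A⟩⟨B⟩`, so `γ_C` is a
covariance matrix of the local observables. The W state is supported on the one-hot strings `e_k`.
An operator on qubit `i` keeps `e_k` in that support only if it does not change qubit `i`, and a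
product of operators on two distinct qubits only if it preserves the number of ones; this turns
every expectation value into an explicit sum over `k`. Different Pauli types are uncorrelated, and
the block of each type has constant diagonal and constant off-diagonal entries. The `σ^x` block has
the constant vector as eigenvector, with eigenvalue `1 + (N − 1) · 2/N = (3N − 2)/N`, and by
Gershgorin's theorem no eigenvalue exceeds the largest absolute row sum, which is that same number.
-/

open Matrix BigOperators
open scoped ComplexOrder

noncomputable section

/-- Commutator of two square matrices. -/
def mComm {d : Type*} [Fintype d] (A B : Matrix d d ℂ) : Matrix d d ℂ := A * B - B * A

/-- Commutation matrix `γ_C(ρ, M)` built from the square root `s = √ρ` of a density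
matrix (for a pure state `ρ = |ψ⟩⟨ψ|`, `√ρ = ρ`), with entries
`γ_C(ρ,M)_{μν} = −tr([M_μ,√ρ][M_ν,√ρ])`. -/
def gammaC {d ι : Type*} [Fintype d] (s : Matrix d d ℂ) (M : ι → Matrix d d ℂ) :
    Matrix ι ι ℝ :=
  fun μ ν => (-(Matrix.trace (mComm (M μ) s * mComm (M ν) s))).re

/-- Largest eigenvalue of a (finite, real symmetric) matrix. -/
def maxEig {ι : Type*} [Fintype ι] (G : Matrix ι ι ℝ) : ℝ :=
  sSup {c : ℝ | ∃ v : ι → ℝ, v ≠ 0 ∧ G.mulVec v = c • v}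

/-- Pauli matrix `σ^x`. -/
def sigmaX : Matrix (Fin 2) (Fin 2) ℂ := !![0, 1; 1, 0]

/-- Pauli matrix `σ^y`. -/
def sigmaY : Matrix (Fin 2) (Fin 2) ℂ := !![0, -Complex.I; Complex.I, 0]

/-- Pauli matrix `σ^z`. -/
def sigmaZ : Matrix (Fin 2) (Fin 2) ℂ := !![1, 0; 0, -1]

/-- The normalized-Pauli trace-orthonormal Hermitian basis
`{σ^x/√2, σ^y/√2, σ^z/√2, I/√2}` of a qubit cell. -/
def pauliBasis : Fin 4 → Matrix (Fin 2) (Fin 2) ℂ :=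
  ![(Real.sqrt 2 : ℂ)⁻¹ • sigmaX, (Real.sqrt 2 : ℂ)⁻¹ • sigmaY,
    (Real.sqrt 2 : ℂ)⁻¹ • sigmaZ, (Real.sqrt 2 : ℂ)⁻¹ • (1 : Matrix (Fin 2) (Fin 2) ℂ)]

/-- The operator on `(ℂ²)^{⊗N}` acting as `A` on qubit `i` and as the identity on
all other qubits. -/
def localOp (N : ℕ) (i : Fin N) (A : Matrix (Fin 2) (Fin 2) ℂ) :
    Matrix (Fin N → Fin 2) (Fin N → Fin 2) ℂ :=
  fun x y => A (x i) (y i) * ∏ j ∈ Finset.univ.erase i, (if x j = y j then 1 else 0)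

/-- The normalized-Pauli local observable set on `N` qubits. -/
def pauliObs (N : ℕ) : Fin N × Fin 4 → Matrix (Fin N → Fin 2) (Fin N → Fin 2) ℂ :=
  fun μ => localOp N μ.1 (pauliBasis μ.2)

section PureState

variable {d : Type*} [Fintype d]

lemma mComm_vecMulVec (A : Matrix d d ℂ) (u v : d → ℂ) :
    mComm A (vecMulVec u v) = vecMulVec (A *ᵥ u) v - vecMulVec u (v ᵥ* A) := by
  rw [mComm, mul_vecMulVec, vecMulVec_mul]

lemma trace_mComm_mul_mComm_vecMulVec {w : d → ℂ} (hw : star w ⬝ᵥ w = 1)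
    (A B : Matrix d d ℂ) :
    trace (mComm A (vecMulVec w (star w)) * mComm B (vecMulVec w (star w)))
      = 2 * (star w ⬝ᵥ A *ᵥ w) * (star w ⬝ᵥ B *ᵥ w)
        - star w ⬝ᵥ A *ᵥ B *ᵥ w - star w ⬝ᵥ B *ᵥ A *ᵥ w := by
  simp only [mComm_vecMulVec, sub_mul, mul_sub, vecMulVec_mul_vecMulVec, trace_sub,
    trace_vecMulVec, dotProduct_smul, smul_eq_mul, dotProduct_comm _ (star w),
    dotProduct_comm (A *ᵥ w) (star w ᵥ* B), dotProduct_comm w (star w ᵥ* B),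
    ← dotProduct_mulVec, hw]
  ring

lemma gammaC_vecMulVec {ι : Type*} {w : d → ℂ} (hw : star w ⬝ᵥ w = 1)
    (M : ι → Matrix d d ℂ) (μ ν : ι) :
    gammaC (vecMulVec w (star w)) M μ ν
      = (star w ⬝ᵥ M μ *ᵥ M ν *ᵥ w + star w ⬝ᵥ M ν *ᵥ M μ *ᵥ w
          - 2 * (star w ⬝ᵥ M μ *ᵥ w) * (star w ⬝ᵥ M ν *ᵥ w)).re := by
  rw [gammaC, trace_mComm_mul_mComm_vecMulVec hw]
  ring_nf

lemma gammaC_ofReal_smul {ι : Type*} (s : Matrix d d ℂ) (M : ι → Matrix d d ℂ) (c : ℝ) :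
    gammaC s (fun μ => (c : ℂ) • M μ) = c ^ 2 • gammaC s M := by
  ext μ ν
  simp only [gammaC, mComm, smul_mul, Matrix.mul_smul, ← smul_sub, smul_smul, trace_smul,
    smul_eq_mul, Matrix.smul_apply, ← Complex.ofReal_mul, mul_neg, Complex.re_ofReal_mul,
    Complex.neg_re]
  ring

end PureState

section Eigenvalues

variable {ι : Type*} [Fintype ι] [DecidableEq ι]

lemma abs_le_of_mulVec_eq_smul {G : Matrix ι ι ℝ} {r c : ℝ} (hrow : ∀ μ, ∑ ν, |G μ ν| ≤ r)
    {v : ι → ℝ} (hv : v ≠ 0) (hvG : G *ᵥ v = c • v) : |c| ≤ r := by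
  have hc : Module.End.HasEigenvalue (toLin' G) c :=
    Module.End.hasEigenvalue_of_hasEigenvector
      ⟨Module.End.mem_eigenspace_iff.mpr (by rwa [toLin'_apply]), hv⟩
  obtain ⟨k, hk⟩ := eigenvalue_mem_ball hc
  rw [Metric.mem_closedBall, Real.dist_eq] at hk
  simp only [Real.norm_eq_abs] at hk
  have := Finset.add_sum_erase _ (fun j => |G k j|) (Finset.mem_univ k)
  linarith [abs_sub_abs_le_abs_sub c (G k k), hrow k]

lemma maxEig_eq_of_mulVec_eq_smul {G : Matrix ι ι ℝ} {r : ℝ} {v : ι → ℝ} (hv : v ≠ 0)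
    (hvG : G *ᵥ v = r • v) (hrow : ∀ μ, ∑ ν, |G μ ν| ≤ r) : maxEig G = r :=
  IsGreatest.csSup_eq ⟨⟨v, hv, hvG⟩, fun _ ⟨_, hu, huG⟩ =>
    (le_abs_self _).trans (abs_le_of_mulVec_eq_smul hrow hu huG)⟩

lemma sum_ite_eq_add_card_sub_one_mul {R : Type*} [CommRing R] (i : ι) (x y : R) :
    ∑ j, (if i = j then x else y) = x + (Fintype.card ι - 1) * y := by
  have h : ∀ j, (if i = j then x else y) = y + if i = j then x - y else 0 := by
    intro j
    split_ifs <;> ring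
  simp only [h, Finset.sum_add_distrib, Finset.sum_ite_eq, Finset.mem_univ, if_true,
    Finset.sum_const, Finset.card_univ, nsmul_eq_mul]
  ring

variable {κ : Type*} [Fintype κ] [DecidableEq κ]

def uniformBlockDiagonal (d c : κ → ℝ) : Matrix (ι × κ) (ι × κ) ℝ :=
  blockDiagonal fun a => of fun i j => if i = j then d a else c a

lemma uniformBlockDiagonal_mulVec_indicator (d c : κ → ℝ) (a₀ : κ) :
    uniformBlockDiagonal (ι := ι) d c *ᵥ (fun μ => if μ.2 = a₀ then 1 else 0)
      = (d a₀ + (Fintype.card ι - 1) * c a₀) • fun μ => if μ.2 = a₀ then 1 else 0 := by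
  ext ⟨i, a⟩
  simp only [uniformBlockDiagonal, mulVec, dotProduct, Fintype.sum_prod_type,
    blockDiagonal_apply', of_apply, mul_ite, mul_one, mul_zero, Pi.smul_apply, smul_eq_mul,
    Finset.sum_ite_eq', Finset.mem_univ, if_true]
  split_ifs with ha
  · rw [ha, sum_ite_eq_add_card_sub_one_mul]
  · exact Finset.sum_const_zero

lemma sum_abs_uniformBlockDiagonal (d c : κ → ℝ) (μ : ι × κ) :
    ∑ ν, |uniformBlockDiagonal (ι := ι) d c μ ν| = |d μ.2| + (Fintype.card ι - 1) * |c μ.2| := by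
  obtain ⟨i, a⟩ := μ
  simp only [uniformBlockDiagonal, Fintype.sum_prod_type, blockDiagonal_apply', of_apply,
    apply_ite (|·| : ℝ → ℝ), abs_zero, Finset.sum_ite_eq, Finset.mem_univ, if_true]
  exact sum_ite_eq_add_card_sub_one_mul (R := ℝ) i _ _

lemma maxEig_uniformBlockDiagonal [Nonempty ι] {d c : κ → ℝ} {r : ℝ} (a₀ : κ)
    (h₀ : d a₀ + (Fintype.card ι - 1) * c a₀ = r)
    (h : ∀ a, |d a| + (Fintype.card ι - 1) * |c a| ≤ r) :
    maxEig (uniformBlockDiagonal (ι := ι) d c) = r := by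
  refine maxEig_eq_of_mulVec_eq_smul ?_ (h₀ ▸ uniformBlockDiagonal_mulVec_indicator d c a₀)
    fun μ => (sum_abs_uniformBlockDiagonal d c μ).trans_le (h μ.2)
  obtain ⟨i⟩ := ‹Nonempty ι›
  exact Function.ne_iff.mpr ⟨(i, a₀), by simp⟩

end Eigenvalues

section Qubits

variable {N : ℕ}

open Function

lemma localOp_apply (i : Fin N) (A : Matrix (Fin 2) (Fin 2) ℂ) (x y : Fin N → Fin 2) :
    localOp N i A x y = ∑ c, if y = update x i c then A (x i) c else 0 := by
  rw [localOp, Finset.prod_boole, Fintype.sum_eq_single (y i)]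
  · simp [eq_update_iff, eq_comm]
  · rintro c hc
    rw [if_neg]
    rintro rfl
    simp at hc

lemma localOp_mulVec_apply (i : Fin N) (A : Matrix (Fin 2) (Fin 2) ℂ)
    (v : (Fin N → Fin 2) → ℂ) (x : Fin N → Fin 2) :
    (localOp N i A *ᵥ v) x = ∑ c, A (x i) c * v (update x i c) := by
  simp only [mulVec, dotProduct, localOp_apply, Finset.sum_mul, ite_mul, zero_mul]
  rw [Finset.sum_comm]
  simp

lemma localOp_mulVec_localOp_mulVec (i : Fin N) (A B : Matrix (Fin 2) (Fin 2) ℂ)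
    (v : (Fin N → Fin 2) → ℂ) :
    localOp N i A *ᵥ localOp N i B *ᵥ v = localOp N i (A * B) *ᵥ v := by
  ext x
  simp only [localOp_mulVec_apply, update_self, update_idem, mul_apply, Finset.mul_sum,
    Finset.sum_mul, mul_assoc]
  exact Finset.sum_comm

lemma localOp_mulVec_localOp_mulVec_apply_of_ne {i j : Fin N} (hij : i ≠ j)
    (A B : Matrix (Fin 2) (Fin 2) ℂ) (v : (Fin N → Fin 2) → ℂ) (x : Fin N → Fin 2) :
    (localOp N i A *ᵥ localOp N j B *ᵥ v) x
      = ∑ c, ∑ d, A (x i) c * B (x j) d * v (update (update x i c) j d) := by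
  simp only [localOp_mulVec_apply, update_of_ne hij.symm, Finset.mul_sum, mul_assoc]

lemma localOp_smul (i : Fin N) (c : ℂ) (A : Matrix (Fin 2) (Fin 2) ℂ) :
    localOp N i (c • A) = c • localOp N i A := by
  ext x y
  simp only [localOp, Matrix.smul_apply, smul_eq_mul, mul_assoc]

def weight (x : Fin N → Fin 2) : ℕ := (Finset.univ.filter fun j => x j = 1).card

lemma weight_eq_sum (x : Fin N → Fin 2) : weight x = ∑ j, (x j : ℕ) := by
  rw [weight, Finset.card_filter]
  refine Finset.sum_congr rfl fun j _ => ?_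
  generalize x j = b
  fin_cases b <;> rfl

lemma weight_update (x : Fin N → Fin 2) (i : Fin N) (c : Fin 2) :
    weight (update x i c) + x i = weight x + c := by
  have hval : (fun j => (update x i c j : ℕ)) = update (fun j => (x j : ℕ)) i c :=
    funext (apply_update (fun _ (b : Fin 2) => (b : ℕ)) x i c)
  rw [weight_eq_sum, weight_eq_sum, hval, Finset.sum_update_of_mem (Finset.mem_univ i),
    Finset.sum_eq_add_sum_sdiff_singleton_of_mem (Finset.mem_univ i)]
  ring

lemma weight_eq_one_iff (x : Fin N → Fin 2) : weight x = 1 ↔ ∃ k, x = Pi.single k 1 := by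
  rw [weight, Finset.card_eq_one]
  refine exists_congr fun k => ⟨fun hk => funext fun j => ?_, ?_⟩
  · have hj := Finset.ext_iff.mp hk j
    simp only [Finset.mem_filter, Finset.mem_univ, true_and, Finset.mem_singleton] at hj
    by_cases hjk : j = k
    · simpa [hjk] using hj
    · simp only [hjk, iff_false, Pi.single_apply, if_false] at hj ⊢
      generalize x j = b at hj
      fin_cases b <;> simp_all
  · rintro rfl
    ext j
    simp [Pi.single_apply]

lemma weight_single (k : Fin N) : weight (Pi.single k (1 : Fin 2)) = 1 :=
  (weight_eq_one_iff _).mpr ⟨k, rfl⟩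

lemma weight_update_single (i k : Fin N) (c : Fin 2) :
    weight (update (Pi.single k 1) i c) = 1 ↔ c = (Pi.single k 1 : Fin N → Fin 2) i := by
  have := weight_update (Pi.single k 1) i c
  rw [weight_single] at this
  rw [Fin.ext_iff]
  omega

lemma weight_update_update_single {i j : Fin N} (hij : i ≠ j) (k : Fin N) (c d : Fin 2) :
    weight (update (update (Pi.single k 1) i c) j d) = 1
      ↔ (c : ℕ) + d
        = ((Pi.single k 1 : Fin N → Fin 2) i : ℕ) + (Pi.single k 1 : Fin N → Fin 2) j := by
  have h₁ := weight_update (Pi.single k 1) i c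
  have h₂ := weight_update (update (Pi.single k 1) i c) j d
  rw [weight_single] at h₁
  rw [update_of_ne hij.symm] at h₂
  omega

lemma sum_single_apply {R : Type*} [CommRing R] (i : Fin N) (f : Fin 2 → R) :
    ∑ k, f ((Pi.single k 1 : Fin N → Fin 2) i) = f 1 + (N - 1) * f 0 := by
  simp only [Pi.single_apply, apply_ite f]
  rw [sum_ite_eq_add_card_sub_one_mul, Fintype.card_fin]

lemma sum_single_apply_single_apply {R : Type*} [CommRing R] {i j : Fin N} (hij : i ≠ j)
    (f : Fin 2 → Fin 2 → R) :
    ∑ k, f ((Pi.single k 1 : Fin N → Fin 2) i) ((Pi.single k 1 : Fin N → Fin 2) j)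
      = f 1 0 + f 0 1 + (N - 2) * f 0 0 := by
  have h : ∀ k, f ((Pi.single k 1 : Fin N → Fin 2) i) ((Pi.single k 1 : Fin N → Fin 2) j)
      = f 0 0 + ((if i = k then f 1 0 - f 0 0 else 0) + if j = k then f 0 1 - f 0 0 else 0) := by
    intro k
    by_cases hik : i = k
    · subst hik
      simp [hij.symm]
    · by_cases hjk : j = k
      · subst hjk
        simp [hij]
      · simp [hik, hjk]
  simp only [h, Finset.sum_add_distrib, Finset.sum_ite_eq, Finset.mem_univ, if_true,
    Finset.sum_const, Finset.card_univ, Fintype.card_fin, nsmul_eq_mul]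
  ring

def wState (N : ℕ) : (Fin N → Fin 2) → ℂ :=
  fun x => if weight x = 1 then (Real.sqrt N : ℂ)⁻¹ else 0

lemma star_wState : star (wState N) = wState N := by
  ext x
  simp [wState, apply_ite star, Complex.conj_ofReal]

lemma star_wState_dotProduct (u : (Fin N → Fin 2) → ℂ) :
    star (wState N) ⬝ᵥ u = (Real.sqrt N : ℂ)⁻¹ * ∑ k, u (Pi.single k 1) := by
  have hsupp : Finset.univ.filter (fun x : Fin N → Fin 2 => weight x = 1)
      = Finset.univ.image fun k => Pi.single k 1 := by
    ext x
    simp [weight_eq_one_iff, eq_comm]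
  have hinj : Injective fun k : Fin N => (Pi.single k 1 : Fin N → Fin 2) := fun k l h => by
    simpa [Pi.single_apply] using congrFun h k
  rw [star_wState, dotProduct, Finset.mul_sum]
  simp only [wState, ite_mul, zero_mul]
  rw [← Finset.sum_filter, hsupp, Finset.sum_image fun k _ l _ h => hinj h]

lemma inv_sqrt_mul_inv_sqrt (N : ℕ) :
    (Real.sqrt N : ℂ)⁻¹ * (Real.sqrt N : ℂ)⁻¹ = (N : ℂ)⁻¹ := by
  rw [← mul_inv, ← Complex.ofReal_mul, Real.mul_self_sqrt (Nat.cast_nonneg N),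
    Complex.ofReal_natCast]

lemma star_wState_dotProduct_wState (hN : N ≠ 0) : star (wState N) ⬝ᵥ wState N = 1 := by
  simp only [star_wState_dotProduct, wState, weight_single, if_true, Finset.sum_const,
    Finset.card_univ, Fintype.card_fin, nsmul_eq_mul]
  rw [mul_left_comm, inv_sqrt_mul_inv_sqrt, mul_inv_cancel₀ (Nat.cast_ne_zero.mpr hN)]

lemma wState_update_single (i k : Fin N) (c : Fin 2) :
    wState N (update (Pi.single k 1) i c)
      = if c = (Pi.single k 1 : Fin N → Fin 2) i then (Real.sqrt N : ℂ)⁻¹ else 0 := by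
  simp only [wState, weight_update_single]

lemma wState_update_update_single {i j : Fin N} (hij : i ≠ j) (k : Fin N) (c d : Fin 2) :
    wState N (update (update (Pi.single k 1) i c) j d)
      = if (c : ℕ) + d
          = ((Pi.single k 1 : Fin N → Fin 2) i : ℕ) + (Pi.single k 1 : Fin N → Fin 2) j
        then (Real.sqrt N : ℂ)⁻¹ else 0 := by
  simp only [wState, weight_update_update_single hij]

lemma star_wState_dotProduct_localOp_mulVec (i : Fin N) (A : Matrix (Fin 2) (Fin 2) ℂ) :
    star (wState N) ⬝ᵥ localOp N i A *ᵥ wState N = (A 1 1 + (N - 1) * A 0 0) / N := by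
  simp only [star_wState_dotProduct, localOp_mulVec_apply, wState_update_single, mul_ite,
    mul_zero, Finset.sum_ite_eq', Finset.mem_univ, if_true, ← Finset.sum_mul]
  rw [sum_single_apply i fun b => A b b, mul_comm, mul_assoc, inv_sqrt_mul_inv_sqrt,
    div_eq_mul_inv]

lemma star_wState_dotProduct_localOp_mulVec_localOp_mulVec {i j : Fin N} (hij : i ≠ j)
    (A B : Matrix (Fin 2) (Fin 2) ℂ) :
    star (wState N) ⬝ᵥ localOp N i A *ᵥ localOp N j B *ᵥ wState N
      = (A 1 1 * B 0 0 + A 1 0 * B 0 1 + A 0 1 * B 1 0 + A 0 0 * B 1 1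
          + (N - 2) * (A 0 0 * B 0 0)) / N := by
  simp only [star_wState_dotProduct, localOp_mulVec_localOp_mulVec_apply_of_ne hij,
    wState_update_update_single hij, mul_ite, mul_zero]
  rw [sum_single_apply_single_apply hij fun p q => ∑ c : Fin 2, ∑ d : Fin 2,
    if (c : ℕ) + d = p + q then A p c * B q d * (Real.sqrt N : ℂ)⁻¹ else 0]
  simp only [Fin.sum_univ_two, Fin.val_zero, Fin.val_one, Nat.reduceEqDiff, ↓reduceIte,
    add_zero, zero_add]
  rw [div_eq_mul_inv, ← inv_sqrt_mul_inv_sqrt]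
  ring

def pauli : Fin 4 → Matrix (Fin 2) (Fin 2) ℂ := ![sigmaX, sigmaY, sigmaZ, 1]

lemma pauliObs_eq_smul (N : ℕ) :
    pauliObs N = fun μ => (((Real.sqrt 2)⁻¹ : ℝ) : ℂ) • localOp N μ.1 (pauli μ.2) := by
  ext ⟨i, a⟩ : 1
  rw [pauliObs, ← localOp_smul, Complex.ofReal_inv]
  fin_cases a <;> rfl

def wStateDiag (N : ℕ) : Fin 4 → ℝ := ![1, 1, 4 * (N - 1) / N ^ 2, 0]

def wStateOffDiag (N : ℕ) : Fin 4 → ℝ := ![2 / N, 2 / N, -4 / N ^ 2, 0]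

lemma gammaC_wState_pauliObs (hN : N ≠ 0) :
    gammaC (vecMulVec (wState N) (star (wState N))) (pauliObs N)
      = uniformBlockDiagonal (wStateDiag N) (wStateOffDiag N) := by
  ext ⟨i, a⟩ ⟨j, b⟩
  rw [pauliObs_eq_smul, gammaC_ofReal_smul, Matrix.smul_apply, inv_pow, Real.sq_sqrt zero_le_two,
    gammaC_vecMulVec (star_wState_dotProduct_wState hN), uniformBlockDiagonal,
    blockDiagonal_apply', of_apply]
  by_cases hij : i = j
  · subst hij
    simp only [localOp_mulVec_localOp_mulVec, star_wState_dotProduct_localOp_mulVec, if_true]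
    fin_cases a <;> fin_cases b <;>
      simp only [pauli, sigmaX, sigmaY, sigmaZ, wStateDiag, mul_apply, Fin.sum_univ_two] <;>
      norm_num <;> field_simp <;> ring
  · simp only [star_wState_dotProduct_localOp_mulVec_localOp_mulVec hij,
      star_wState_dotProduct_localOp_mulVec_localOp_mulVec (Ne.symm hij),
      star_wState_dotProduct_localOp_mulVec, hij, if_false]
    fin_cases a <;> fin_cases b <;>
      simp only [pauli, sigmaX, sigmaY, sigmaZ, wStateOffDiag] <;>
      norm_num <;> field_simp <;> ring

lemma abs_wStateDiag_add_mul_abs_wStateOffDiag_le (hN : 2 ≤ N) (a : Fin 4) :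
    |wStateDiag N a| + (N - 1) * |wStateOffDiag N a| ≤ (3 * N - 2) / N := by
  have hN' : (2 : ℝ) ≤ N := by exact_mod_cast hN
  -- the `σ^z` row is `8 (N - 1) ≤ N (3N - 2)`, i.e. `(N - 2) (3N - 4) ≥ 0`
  fin_cases a <;>
    norm_num [wStateDiag, wStateOffDiag, abs_div, abs_of_nonneg (by linarith : (0 : ℝ) ≤ N - 1)] <;>
    field_simp <;>
    nlinarith [mul_nonneg (sub_nonneg.2 hN') (by linarith : (0 : ℝ) ≤ 3 * N - 4)]

end Qubits

/-- For the `N`-qubit W state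
`W_N = (1/√N)(|10⋯0⟩ + |01⋯0⟩ + ⋯ + |00⋯1⟩)`, `N ≥ 2`, the quantum state
advantage equals `Γ_C(|W_N⟩⟨W_N|) = (3N − 2)/N`. -/
theorem gammaC_of_W_state
    (N : ℕ) (hN : 2 ≤ N)
    (W : (Fin N → Fin 2) → ℂ)
    (hW : ∀ x, W x =
      if (Finset.univ.filter fun j => x j = 1).card = 1
      then (Real.sqrt N : ℂ)⁻¹ else 0) :
    maxEig (gammaC (vecMulVec W (star W)) (pauliObs N))
      = (3 * (N : ℝ) - 2) / N := by
  obtain rfl : W = wState N := funext hW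
  have : Nonempty (Fin N) := ⟨⟨0, by omega⟩⟩
  rw [gammaC_wState_pauliObs (by omega)]
  refine maxEig_uniformBlockDiagonal 0 ?_ fun a => ?_ <;> rw [Fintype.card_fin]
  · simp only [wStateDiag, wStateOffDiag, cons_val_zero]
    field_simp
    ring
  · exact abs_wStateDiag_add_mul_abs_wStateOffDiag_le hN a
end
end

section
/- Let ψ be a pure state of N qubits (N ≥ 2) such that every single-site reduced density matrix equals I/2 and every two-site reduced density matrix equals I/4 (maximal entanglement entropy for all one- and two-site partitions). Then, with the normalized-Pauli local observable set, the commutation matrix γ_C(|ψ⟩⟨ψ|, M) is diagonal, with diagonal entry 1 for every observable built from a Pauli matrix σ^x/√2, σ^y/√2, σ^z/√2 and 0 for every observable built from I/√2; consequently the quantum state advantage is Γ_C(|ψ⟩⟨ψ|) = 1. -/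
/-!
For a pure state `ρ = |ψ⟩⟨ψ|` one has `ρ X ρ = ⟨X⟩ ρ`, so
`-tr([A, ρ][B, ρ]) = ⟨AB⟩ + ⟨BA⟩ - 2⟨A⟩⟨B⟩` is a symmetrised covariance.
Maximally mixed two-site marginals make observables on different sites uncorrelated, and the
maximally mixed one-site marginals turn the same-site covariance of normalised Paulis into
`tr(P_a P_b) - tr(P_a) tr(P_b) / 2 = δ_ab - δ_a3 δ_b3`. Hence `γ_C` is diagonal with entries
`1, 1, 1, 0` on every site, and its largest eigenvalue is `1`.
-/

open Matrix BigOperators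
open scoped ComplexOrder

noncomputable section

open scoped Kronecker

section PureState

variable {d : Type*} [Fintype d]

theorem trace_vecMulVec_mul (ψ w : d → ℂ) (X : Matrix d d ℂ) :
    trace (vecMulVec ψ w * X) = ψ ⬝ᵥ (w ᵥ* X) := by
  rw [vecMulVec_mul, trace_vecMulVec]

theorem vecMulVec_mul_mul_vecMulVec (ψ w : d → ℂ) (X : Matrix d d ℂ) :
    vecMulVec ψ w * X * vecMulVec ψ w = trace (vecMulVec ψ w * X) • vecMulVec ψ w := by
  rw [trace_vecMulVec_mul, vecMulVec_mul, vecMulVec_mul_vecMulVec, dotProduct_comm,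
    vecMulVec_smul]

theorem neg_trace_mComm_mul_mComm_vecMulVec {ψ w : d → ℂ} (hw : w ⬝ᵥ ψ = 1)
    (A B : Matrix d d ℂ) :
    -trace (mComm A (vecMulVec ψ w) * mComm B (vecMulVec ψ w))
      = trace (vecMulVec ψ w * (A * B)) + trace (vecMulVec ψ w * (B * A))
        - 2 * (trace (vecMulVec ψ w * A) * trace (vecMulVec ψ w * B)) := by
  set ρ := vecMulVec ψ w
  have hρρ : ρ * ρ = ρ := by rw [vecMulVec_mul_vecMulVec, hw, one_smul]
  have htr : trace ρ = 1 := by rw [trace_vecMulVec, dotProduct_comm, hw]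
  have hsandwich : ∀ X, ρ * X * ρ = trace (ρ * X) • ρ := vecMulVec_mul_mul_vecMulVec ψ w
  have hexpand : mComm A ρ * mComm B ρ
      = A * (ρ * B * ρ) - A * (ρ * ρ) * B - ρ * (A * B) * ρ + ρ * A * ρ * B := by
    simp only [mComm]; noncomm_ring
  have hAρBρ : trace (A * (trace (ρ * B) • ρ)) = trace (ρ * A) * trace (ρ * B) := by
    rw [Matrix.mul_smul, trace_smul, smul_eq_mul, trace_mul_comm A, mul_comm]
  have hAρB : trace (A * ρ * B) = trace (ρ * (B * A)) := by
    rw [trace_mul_cycle, trace_mul_comm]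
  have hρABρ : trace (trace (ρ * (A * B)) • ρ) = trace (ρ * (A * B)) := by
    rw [trace_smul, htr, smul_eq_mul, mul_one]
  have hρAρB : trace (trace (ρ * A) • ρ * B) = trace (ρ * A) * trace (ρ * B) := by
    rw [Matrix.smul_mul, trace_smul, smul_eq_mul]
  rw [hexpand, hρρ, hsandwich, hsandwich, hsandwich, trace_add, trace_sub, trace_sub, hAρBρ,
    hAρB, hρABρ, hρAρB]
  ring

theorem gammaC_vecMulVec_apply {ι : Type*} {ψ w : d → ℂ} (hw : w ⬝ᵥ ψ = 1)
    (M : ι → Matrix d d ℂ) (μ ν : ι) :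
    gammaC (vecMulVec ψ w) M μ ν
      = (trace (vecMulVec ψ w * (M μ * M ν)) + trace (vecMulVec ψ w * (M ν * M μ))
        - 2 * (trace (vecMulVec ψ w * M μ) * trace (vecMulVec ψ w * M ν))).re := by
  rw [gammaC, neg_trace_mComm_mul_mComm_vecMulVec hw]

theorem gammaC_vecMulVec_eq_zero_of_uncorrelated {ι : Type*} {ψ w : d → ℂ}
    (hw : w ⬝ᵥ ψ = 1) {M : ι → Matrix d d ℂ} {μ ν : ι}
    (hμν : trace (vecMulVec ψ w * (M μ * M ν))
      = trace (vecMulVec ψ w * M μ) * trace (vecMulVec ψ w * M ν))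
    (hνμ : trace (vecMulVec ψ w * (M ν * M μ))
      = trace (vecMulVec ψ w * M μ) * trace (vecMulVec ψ w * M ν)) :
    gammaC (vecMulVec ψ w) M μ ν = 0 := by
  rw [gammaC_vecMulVec_apply hw, hμν, hνμ, ← two_mul, sub_self, Complex.zero_re]

end PureState

theorem localOp_eq_submatrix_kronecker (N : ℕ) (i : Fin N) (A : Matrix (Fin 2) (Fin 2) ℂ) :
    localOp N i A = (A ⊗ₖ (1 : Matrix ({j // j ≠ i} → Fin 2) ({j // j ≠ i} → Fin 2) ℂ)).submatrix
      (Equiv.funSplitAt i (Fin 2)) (Equiv.funSplitAt i (Fin 2)) := by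
  ext x y
  simp [localOp, kroneckerMap_apply, one_apply, Finset.prod_boole, funext_iff]

theorem localOp_mul_localOp (N : ℕ) (i : Fin N) (A B : Matrix (Fin 2) (Fin 2) ℂ) :
    localOp N i A * localOp N i B = localOp N i (A * B) := by
  simp only [localOp_eq_submatrix_kronecker, submatrix_mul_equiv, ← mul_kronecker_mul, one_mul]

theorem ofReal_sqrt_two_sq : ((Real.sqrt 2 : ℝ) : ℂ) ^ 2 = 2 := by
  rw [← Complex.ofReal_pow, Real.sq_sqrt zero_le_two, Complex.ofReal_ofNat]

theorem trace_pauliBasis (a : Fin 4) :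
    trace (pauliBasis a) = if a = 3 then (Real.sqrt 2 : ℂ) else 0 := by
  fin_cases a <;> simp [pauliBasis, sigmaX, sigmaY, sigmaZ, trace_fin_two]
  field_simp
  exact ofReal_sqrt_two_sq.symm

theorem trace_pauliBasis_mul_pauliBasis (a b : Fin 4) :
    trace (pauliBasis a * pauliBasis b) = if a = b then 1 else 0 := by
  fin_cases a <;> fin_cases b <;> simp [pauliBasis, sigmaX, sigmaY, sigmaZ, trace_fin_two] <;>
    field_simp <;> simp [ofReal_sqrt_two_sq] <;> ring

theorem gammaC_pauliObs_same_site {N : ℕ} {ψ w : (Fin N → Fin 2) → ℂ} (hw : w ⬝ᵥ ψ = 1)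
    {i : Fin N} (h1 : ∀ B : Matrix (Fin 2) (Fin 2) ℂ,
      trace (vecMulVec ψ w * localOp N i B) = trace B / 2) (a b : Fin 4) :
    gammaC (vecMulVec ψ w) (pauliObs N) (i, a) (i, b)
      = if a = b then (if a = 3 then 0 else 1) else 0 := by
  simp only [gammaC_vecMulVec_apply hw, pauliObs, localOp_mul_localOp, h1,
    trace_pauliBasis_mul_pauliBasis, trace_pauliBasis]
  split_ifs <;> simp_all
  · linear_combination (-1 / 2 : ℝ) * Real.mul_self_sqrt (zero_le_two : (0 : ℝ) ≤ 2)
  · norm_num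

theorem gammaC_pauliObs_eq_diagonal {N : ℕ} {ψ w : (Fin N → Fin 2) → ℂ} (hw : w ⬝ᵥ ψ = 1)
    (h1 : ∀ i : Fin N, ∀ B : Matrix (Fin 2) (Fin 2) ℂ,
      trace (vecMulVec ψ w * localOp N i B) = trace B / 2)
    (h2 : ∀ i j : Fin N, i ≠ j → ∀ B C : Matrix (Fin 2) (Fin 2) ℂ,
      trace (vecMulVec ψ w * (localOp N i B * localOp N j C)) = trace B * trace C / 4) :
    gammaC (vecMulVec ψ w) (pauliObs N) = diagonal fun μ => if μ.2 = 3 then 0 else 1 := by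
  ext ⟨i, a⟩ ⟨j, b⟩
  rcases eq_or_ne i j with rfl | hij
  · rw [gammaC_pauliObs_same_site hw (h1 i), diagonal_apply]
    simp
  · rw [diagonal_apply_ne _ (by simp [hij])]
    refine gammaC_vecMulVec_eq_zero_of_uncorrelated hw ?_ ?_ <;>
      simp only [pauliObs, h1, h2 _ _ hij, h2 _ _ hij.symm] <;> ring

theorem eigenvalues_diagonal {ι : Type*} [Fintype ι] [DecidableEq ι] (w : ι → ℝ) :
    {c : ℝ | ∃ v : ι → ℝ, v ≠ 0 ∧ (diagonal w).mulVec v = c • v} = Set.range w := by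
  ext c
  constructor
  · rintro ⟨v, hv, hvc⟩
    obtain ⟨μ, hμ⟩ := Function.ne_iff.mp hv
    have := congrFun hvc μ
    rw [mulVec_diagonal, Pi.smul_apply, smul_eq_mul] at this
    exact ⟨μ, mul_right_cancel₀ hμ this⟩
  · rintro ⟨μ, rfl⟩
    refine ⟨Pi.single μ 1, by simp, ?_⟩
    ext ν
    rcases eq_or_ne ν μ with rfl | hνμ <;> simp [mulVec_diagonal, *]

theorem maxEig_diagonal {ι : Type*} [Fintype ι] [DecidableEq ι] (w : ι → ℝ) :
    maxEig (diagonal w) = ⨆ μ, w μ := by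
  rw [maxEig, eigenvalues_diagonal, iSup]

/-- Let `ψ` be a pure state of `N ≥ 2` qubits such that every
single-site reduced density matrix equals `I/2` (encoded as
`tr(ρ · (B ⊗ I)) = tr(B)/2` for all one-site observables `B`) and every two-site
reduced density matrix equals `I/4` (encoded as
`tr(ρ · (B ⊗ C ⊗ I)) = tr(B)tr(C)/4`). Then, with the normalized-Pauli local
observable set, the commutation matrix `γ_C(|ψ⟩⟨ψ|, M)` is diagonal, with diagonal
entry `1` for every Pauli observable and `0` for every identity observable;
consequently `Γ_C(|ψ⟩⟨ψ|) = 1`. -/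
theorem maximally_entangled_chaos_gammaC_eq_one
    (N : ℕ) (hN : 2 ≤ N)
    (ψ : (Fin N → Fin 2) → ℂ) (hψ : star ψ ⬝ᵥ ψ = 1)
    (h1 : ∀ i : Fin N, ∀ B : Matrix (Fin 2) (Fin 2) ℂ,
      Matrix.trace (vecMulVec ψ (star ψ) * localOp N i B) = Matrix.trace B / 2)
    (h2 : ∀ i j : Fin N, i ≠ j → ∀ B C : Matrix (Fin 2) (Fin 2) ℂ,
      Matrix.trace (vecMulVec ψ (star ψ) * (localOp N i B * localOp N j C))
        = Matrix.trace B * Matrix.trace C / 4) :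
    (∀ μ ν : Fin N × Fin 4, μ ≠ ν →
      gammaC (vecMulVec ψ (star ψ)) (pauliObs N) μ ν = 0) ∧
    (∀ μ : Fin N × Fin 4,
      gammaC (vecMulVec ψ (star ψ)) (pauliObs N) μ μ
        = if μ.2 = 3 then 0 else 1) ∧
    maxEig (gammaC (vecMulVec ψ (star ψ)) (pauliObs N)) = 1 := by
  rw [gammaC_pauliObs_eq_diagonal hψ h1 h2]
  refine ⟨fun μ ν hμν => diagonal_apply_ne _ hμν, fun μ => diagonal_apply_eq _ μ, ?_⟩
  rw [maxEig_diagonal]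
  refine IsGreatest.csSup_eq ⟨⟨(⟨0, by omega⟩, 0), rfl⟩, ?_⟩
  rintro _ ⟨μ, rfl⟩
  dsimp only
  split_ifs <;> norm_num
end
end
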